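/- Let γ1, γ2, γ3 ∈ ℝ, let u = exp(i(γ1 σx + γ2 σy + γ3 σz)) be a single-qubit unitary, and set γ = √(γ1² + γ2² + γ3²). Then the controlled-u gate C(u) = [[1,0],[0,0]]⊗I₂ + [[0,0],[0,1]]⊗u is locally equivalent (up to a global phase) to A(γ, 0, 0): there exist α ∈ ℝ and local gates k1, k2 (each of the form a⊗b with a, b ∈ SU(2)) such that C(u) = e^{iα} · k1 · A(γ, 0, 0) · k2. -/

import Mathlib

open Matrix Complex

noncomputable section

/-- Pauli matrix σx. -/
def sigmaX : Matrix (Fin 2) (Fin 2) ℂ := !![0, 1; 1, 0]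
/-- Pauli matrix σy. -/
def sigmaY : Matrix (Fin 2) (Fin 2) ℂ := !![0, -I; I, 0]
/-- Pauli matrix σz. -/
def sigmaZ : Matrix (Fin 2) (Fin 2) ℂ := !![1, 0; 0, -1]

/-- Kronecker product of two 2×2 complex matrices, as a 4×4 matrix
(row-major ordering: entry ((2i+k),(2j+l)) is `A i j * B k l`). -/
def kron (A B : Matrix (Fin 2) (Fin 2) ℂ) : Matrix (Fin 4) (Fin 4) ℂ :=
  Matrix.of fun i j =>
    A ⟨i.val / 2, by have := i.isLt; omega⟩ ⟨j.val / 2, by have := j.isLt; omega⟩ *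
    B ⟨i.val % 2, by have := i.isLt; omega⟩ ⟨j.val % 2, by have := j.isLt; omega⟩

/-- Membership in SU(2): 2×2 unitary with determinant 1. -/
def InSU2 (k : Matrix (Fin 2) (Fin 2) ℂ) : Prop := kᴴ * k = 1 ∧ k.det = 1

/-- The gate A(c1,c2,c3) = exp((i/2)(c1 σx⊗σx + c2 σy⊗σy + c3 σz⊗σz)). -/
def Agate (c1 c2 c3 : ℝ) : Matrix (Fin 4) (Fin 4) ℂ :=
  NormedSpace.exp ((I / 2) •
    ((c1 : ℂ) • kron sigmaX sigmaX + (c2 : ℂ) • kron sigmaY sigmaY +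
      (c3 : ℂ) • kron sigmaZ sigmaZ))

/-! ### Auxiliary lemmas -/

lemma fval2 : ((2:Fin 4):ℕ) = 2 := rfl
lemma fval3 : ((3:Fin 4):ℕ) = 3 := rfl

lemma kron_mul (A B C D : Matrix (Fin 2) (Fin 2) ℂ) :
    kron A B * kron C D = kron (A * C) (B * D) := by
  ext ⟨i, hi⟩ ⟨j, hj⟩
  interval_cases i <;> interval_cases j <;>
    · simp only [kron, Matrix.mul_apply, Matrix.of_apply, Fin.sum_univ_four, Fin.sum_univ_two,
        fval2, fval3, Fin.val_zero, Fin.val_one, Nat.reduceDiv, Nat.reduceMod,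
        Fin.mk_one, Fin.mk_zero]
      ring

lemma kron_conjT (A B : Matrix (Fin 2) (Fin 2) ℂ) : (kron A B)ᴴ = kron Aᴴ Bᴴ := by
  ext ⟨i, hi⟩ ⟨j, hj⟩
  interval_cases i <;> interval_cases j <;> simp [kron, Matrix.conjTranspose_apply]

lemma kron_one : kron 1 1 = 1 := by
  ext ⟨i, hi⟩ ⟨j, hj⟩
  interval_cases i <;> interval_cases j <;>
    simp [kron, Matrix.one_apply, Fin.ext_iff, fval2, fval3]

lemma su2_mul {a b : Matrix (Fin 2) (Fin 2) ℂ} (ha : InSU2 a) (hb : InSU2 b) : InSU2 (a * b) := by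
  obtain ⟨ha1, ha2⟩ := ha; obtain ⟨hb1, hb2⟩ := hb
  constructor
  · rw [Matrix.conjTranspose_mul, Matrix.mul_assoc, ← Matrix.mul_assoc aᴴ, ha1,
      Matrix.one_mul, hb1]
  · rw [Matrix.det_mul, ha2, hb2, one_mul]

lemma su2_conjT {a : Matrix (Fin 2) (Fin 2) ℂ} (ha : InSU2 a) : InSU2 aᴴ := by
  obtain ⟨ha1, ha2⟩ := ha
  refine ⟨?_, ?_⟩
  · rw [Matrix.conjTranspose_conjTranspose]; exact (mul_eq_one_comm).mp ha1
  · rw [Matrix.det_conjTranspose, ha2]; simp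

lemma sq2 : ((Real.sqrt 2 : ℝ) : ℂ) ^ 2 = 2 := by
  norm_cast
  exact Real.sq_sqrt (by norm_num)

/-- The (real) rotation by π/2 about the y axis. -/
def wMat : Matrix (Fin 2) (Fin 2) ℂ := (((Real.sqrt 2)⁻¹ : ℝ) : ℂ) • !![1, -1; 1, 1]

lemma su2_w : InSU2 wMat := by
  constructor
  · ext ⟨i, hi⟩ ⟨j, hj⟩
    interval_cases i <;> interval_cases j <;>
      simp [wMat, Matrix.mul_apply, Fin.sum_univ_two, Matrix.one_apply,
        Matrix.conjTranspose_apply] <;> ring_nf <;> simp [sq2]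
  · simp [wMat, Matrix.det_fin_two]
    ring_nf
    simp [sq2]

lemma w_conj : wMat * sigmaZ * wMatᴴ = sigmaX := by
  ext ⟨i, hi⟩ ⟨j, hj⟩
  interval_cases i <;> interval_cases j <;>
    simp [wMat, sigmaZ, sigmaX, Matrix.mul_apply, Fin.sum_univ_two,
      Matrix.conjTranspose_apply] <;> ring_nf <;> simp [sq2]

/-- i σx. -/
def sI : Matrix (Fin 2) (Fin 2) ℂ := !![0, I; I, 0]

lemma su2_sI : InSU2 sI := by
  constructor
  · ext ⟨i, hi⟩ ⟨j, hj⟩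
    interval_cases i <;> interval_cases j <;>
      simp [sI, Matrix.mul_apply, Fin.sum_univ_two, Matrix.one_apply, Matrix.conjTranspose_apply]
  · simp [sI, Matrix.det_fin_two]

lemma kron_zz (c : ℂ) : c • kron sigmaZ sigmaZ = Matrix.diagonal ![c, -c, -c, c] := by
  ext ⟨i, hi⟩ ⟨j, hj⟩
  interval_cases i <;> interval_cases j <;>
    simp [kron, sigmaZ, Matrix.diagonal, Fin.ext_iff, fval2, fval3]

lemma blocks_diag (x y : ℂ) :
    kron !![1, 0; 0, 0] 1 + kron !![0, 0; 0, 1] (Matrix.diagonal ![x, y]) =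
      Matrix.diagonal ![1, 1, x, y] := by
  ext ⟨i, hi⟩ ⟨j, hj⟩
  interval_cases i <;> interval_cases j <;>
    simp [kron, Matrix.diagonal, Matrix.one_apply, Fin.ext_iff, fval2, fval3]

lemma mid_eq (x y : ℂ) (h : x * y = 1) :
    kron sI (Matrix.diagonal ![x, y]) * Matrix.diagonal ![x, y, y, x] * kron sIᴴ 1 =
      Matrix.diagonal ![1, 1, x*x, y*y] := by
  ext ⟨i, hi⟩ ⟨j, hj⟩
  interval_cases i <;> interval_cases j <;>
    simp [kron, sI, Matrix.diagonal, Matrix.mul_apply, Fin.sum_univ_four, Fin.ext_iff,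
      fval2, fval3, Matrix.conjTranspose_apply, Matrix.one_apply] <;>
    first
      | ring1
      | linear_combination h
      | linear_combination -h
      | linear_combination h - x*y*Complex.I_sq
      | linear_combination -(x*y)*Complex.I_sq
      | linear_combination (x*y)*Complex.I_sq
      | linear_combination -(x*x)*Complex.I_sq
      | linear_combination (x*x)*Complex.I_sq
      | linear_combination -(y*y)*Complex.I_sq
      | linear_combination (y*y)*Complex.I_sq

lemma diag_N (γ1 γ2 γ3 : ℝ) :
    ∃ v : Matrix (Fin 2) (Fin 2) ℂ, InSU2 v ∧
      v * ((γ1:ℂ) • sigmaX + (γ2:ℂ) • sigmaY + (γ3:ℂ) • sigmaZ) * vᴴ =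
        ((Real.sqrt (γ1^2+γ2^2+γ3^2) : ℝ) : ℂ) • sigmaZ := by
  set r := Real.sqrt (γ1^2+γ2^2+γ3^2) with hrdef
  clear_value r
  have hr0 : 0 ≤ r := hrdef ▸ Real.sqrt_nonneg _
  have hr2 : r^2 = γ1^2+γ2^2+γ3^2 := by rw [hrdef]; exact Real.sq_sqrt (by positivity)
  have habs : |γ3| ≤ r := by
    rw [hrdef, ← Real.sqrt_sq_eq_abs]
    exact Real.sqrt_le_sqrt (by nlinarith [sq_nonneg γ1, sq_nonneg γ2])
  have hsum : 0 ≤ r + γ3 := by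
    rcases abs_le.mp habs with ⟨h1, _⟩; linarith
  have hc : ((r:ℝ):ℂ)^2 = (γ1:ℂ)^2+(γ2:ℂ)^2+(γ3:ℂ)^2 := by exact_mod_cast hr2
  rcases eq_or_lt_of_le hsum with h | h
  · -- degenerate: r + γ3 = 0, so γ1 = γ2 = 0, γ3 = -r
    have h3 : γ3 = -r := by linarith
    have h1 : γ1 = 0 := by nlinarith [sq_nonneg γ1, sq_nonneg γ2]
    have h2 : γ2 = 0 := by nlinarith [sq_nonneg γ1, sq_nonneg γ2]
    refine ⟨sI, ⟨?_, ?_⟩, ?_⟩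
    · ext ⟨i, hi⟩ ⟨j, hj⟩
      interval_cases i <;> interval_cases j <;>
        simp [sI, Matrix.mul_apply, Fin.sum_univ_two, Matrix.one_apply,
          Matrix.conjTranspose_apply]
    · simp [sI, Matrix.det_fin_two]
    · ext ⟨i, hi⟩ ⟨j, hj⟩
      interval_cases i <;> interval_cases j <;>
        simp [sI, sigmaX, sigmaY, sigmaZ, Matrix.mul_apply, Fin.sum_univ_two,
          Matrix.conjTranspose_apply, h1, h2, h3] <;>
        first
          | ring1
          | linear_combination ((r:ℝ):ℂ) * Complex.I_sq
          | linear_combination (-((r:ℝ):ℂ)) * Complex.I_sq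
  · -- main case: r + γ3 > 0
    have hrpos : 0 < r := by
      rcases abs_le.mp habs with ⟨h1, h2⟩
      by_contra hn
      push_neg at hn
      have h0 : r = 0 := le_antisymm hn hr0
      rw [h0] at h h1 h2
      linarith
    set d := Real.sqrt (2*r*(r+γ3)) with hddef
    clear_value d
    have hd2 : d^2 = 2*r*(r+γ3) := by rw [hddef]; exact Real.sq_sqrt (by positivity)
    have hd0 : 0 < d := by rw [hddef]; exact Real.sqrt_pos.mpr (by positivity)
    have hdc : ((d:ℝ):ℂ)^2 = 2*(r:ℂ)*((r:ℂ)+(γ3:ℂ)) := by exact_mod_cast hd2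
    have hdne : ((d:ℝ):ℂ) ≠ 0 := by exact_mod_cast hd0.ne'
    set m : Matrix (Fin 2) (Fin 2) ℂ :=
      !![(r:ℂ) + γ3, (γ1:ℂ) - (γ2:ℂ)*I; -((γ1:ℂ) + (γ2:ℂ)*I), (r:ℂ) + γ3] with hmdef
    clear_value m
    have hmm : mᴴ * m = (((d:ℝ):ℂ)^2) • 1 := by
      ext ⟨i, hi⟩ ⟨j, hj⟩
      interval_cases i <;> interval_cases j <;>
        simp [hmdef, Matrix.mul_apply, Fin.sum_univ_two, Matrix.one_apply,
          Matrix.conjTranspose_apply, Complex.conj_ofReal] <;>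
        first
          | ring1
          | linear_combination -hdc - hc - (γ2:ℂ)^2 * Complex.I_sq
    have hdm : m.det = ((d:ℝ):ℂ)^2 := by
      rw [hmdef, Matrix.det_fin_two_of]
      linear_combination -hdc - hc - (γ2:ℂ)^2 * Complex.I_sq
    have hcj : m * ((γ1:ℂ) • sigmaX + (γ2:ℂ) • sigmaY + (γ3:ℂ) • sigmaZ) * mᴴ =
        (((d:ℝ):ℂ)^2 * (r:ℂ)) • sigmaZ := by
      ext ⟨i, hi⟩ ⟨j, hj⟩
      interval_cases i <;> interval_cases j <;>
        simp [hmdef, sigmaX, sigmaY, sigmaZ, Matrix.mul_apply, Fin.sum_univ_two,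
          Matrix.conjTranspose_apply, Complex.conj_ofReal] <;>
        first
          | ring1
          | linear_combination (-(r:ℂ)) * hdc + (-(2*(r:ℂ)+(γ3:ℂ))) * hc +
              (-((2*(r:ℂ)+(γ3:ℂ))*(γ2:ℂ)^2)) * Complex.I_sq
          | linear_combination ((γ1:ℂ)-(γ2:ℂ)*I) * hc + ((γ1:ℂ)-(γ2:ℂ)*I)*(γ2:ℂ)^2 * Complex.I_sq
          | linear_combination ((γ1:ℂ)+(γ2:ℂ)*I) * hc + ((γ1:ℂ)+(γ2:ℂ)*I)*(γ2:ℂ)^2 * Complex.I_sq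
          | linear_combination ((r:ℂ)) * hdc + (2*(r:ℂ)+(γ3:ℂ)) * hc +
              ((2*(r:ℂ)+(γ3:ℂ))*(γ2:ℂ)^2) * Complex.I_sq
    have hstar : star (((d:ℝ):ℂ))⁻¹ = ((d:ℝ):ℂ)⁻¹ := by
      simp [← Complex.ofReal_inv, Complex.conj_ofReal]
    refine ⟨(((d:ℝ):ℂ))⁻¹ • m, ⟨?_, ?_⟩, ?_⟩
    · rw [Matrix.conjTranspose_smul, hstar, Matrix.smul_mul, Matrix.mul_smul, hmm,
        smul_smul, smul_smul]
      rw [show ((d:ℂ))⁻¹ * ((d:ℂ))⁻¹ * ((d:ℂ)) ^ 2 = 1 by field_simp, one_smul]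
    · rw [Matrix.det_smul, hdm]
      simp only [Fintype.card_fin]
      field_simp
    · rw [Matrix.conjTranspose_smul, hstar, Matrix.smul_mul, Matrix.smul_mul, Matrix.mul_smul,
        hcj, smul_smul, smul_smul]
      rw [show ((d:ℂ))⁻¹ * ((d:ℂ))⁻¹ * ((d:ℂ) ^ 2 * (r:ℂ)) = (r:ℂ) by field_simp]

/-- Every controlled-u gate, with u = exp(i(γ1 σx + γ2 σy + γ3 σz)), is locally
equivalent up to a global phase to A(γ, 0, 0) where γ = √(γ1²+γ2²+γ3²). -/
theorem controlled_u_locally_equivalent (γ1 γ2 γ3 : ℝ) :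
    ∃ (α : ℝ) (a1 b1 a2 b2 : Matrix (Fin 2) (Fin 2) ℂ),
      InSU2 a1 ∧ InSU2 b1 ∧ InSU2 a2 ∧ InSU2 b2 ∧
      kron !![1, 0; 0, 0] (1 : Matrix (Fin 2) (Fin 2) ℂ) +
        kron !![0, 0; 0, 1]
          (NormedSpace.exp (I • ((γ1 : ℂ) • sigmaX + (γ2 : ℂ) • sigmaY +
            (γ3 : ℂ) • sigmaZ))) =
      Complex.exp (I * (α : ℂ)) •
        (kron a1 b1 * Agate (Real.sqrt (γ1 ^ 2 + γ2 ^ 2 + γ3 ^ 2)) 0 0 * kron a2 b2) := by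
  obtain ⟨v, hv, hvN⟩ := diag_N γ1 γ2 γ3
  set r : ℝ := Real.sqrt (γ1 ^ 2 + γ2 ^ 2 + γ3 ^ 2) with hrdef
  set N : Matrix (Fin 2) (Fin 2) ℂ :=
    (γ1 : ℂ) • sigmaX + (γ2 : ℂ) • sigmaY + (γ3 : ℂ) • sigmaZ with hNdef
  set x : ℂ := Complex.exp (I * r / 2) with hxdef
  set y : ℂ := Complex.exp (-(I * r / 2)) with hydef
  have hxy : x * y = 1 := by
    rw [hxdef, hydef, ← Complex.exp_add]
    norm_num
  have hyx : y * x = 1 := by rw [mul_comm]; exact hxy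
  have hv1 : vᴴ * v = 1 := hv.1
  have hv2 : v * vᴴ = 1 := mul_eq_one_comm.mp hv1
  have hvU : IsUnit v := ⟨⟨v, vᴴ, hv2, hv1⟩, rfl⟩
  have hvinv : v⁻¹ = vᴴ := Matrix.inv_eq_right_inv hv2
  have hw1 : wMatᴴ * wMat = 1 := su2_w.1
  have hw2 : wMat * wMatᴴ = 1 := mul_eq_one_comm.mp hw1
  -- step 1 : exp (I • N) = vᴴ * diagonal ![x*x, y*y] * v
  have hstep1 : NormedSpace.exp (I • N) = vᴴ * Matrix.diagonal ![x*x, y*y] * v := by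
    have hrep : N = vᴴ * (((r:ℝ):ℂ) • sigmaZ) * v := by
      calc N = (vᴴ * v) * N * (vᴴ * v) := by rw [hv1, Matrix.one_mul, Matrix.mul_one]
      _ = vᴴ * (v * N * vᴴ) * v := by simp only [Matrix.mul_assoc]
      _ = vᴴ * (((r:ℝ):ℂ) • sigmaZ) * v := by rw [hvN]
    have hdiag : I • (((r:ℝ):ℂ) • sigmaZ) = Matrix.diagonal ![I * r, -(I * r)] := by
      ext ⟨i, hi⟩ ⟨j, hj⟩
      interval_cases i <;> interval_cases j <;>
        simp [sigmaZ, Matrix.diagonal, Fin.ext_iff] <;> ring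
    have hIN : I • N = v⁻¹ * Matrix.diagonal ![I * r, -(I * r)] * v := by
      rw [hvinv, hrep, ← hdiag]
      simp only [Matrix.mul_smul, Matrix.smul_mul]
    have hexpfun : NormedSpace.exp (![I * (r:ℂ), -(I * (r:ℂ))] : Fin 2 → ℂ) = ![x*x, y*y] := by
      funext i
      rw [Pi.coe_exp, ← Complex.exp_eq_exp_ℂ]
      fin_cases i <;> simp [hxdef, hydef, ← Complex.exp_add] <;> congr 1 <;> ring
    rw [hIN, Matrix.exp_conj' v _ hvU, hvinv, Matrix.exp_diagonal, hexpfun]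
  -- step 2 : Agate r 0 0 = W * diagonal ![x,y,y,x] * Wᴴ  with W = wMat ⊗ wMat
  have hWW : kron wMat wMat * kron wMatᴴ wMatᴴ = 1 := by
    rw [kron_mul, hw2, kron_one]
  have hWW' : kron wMatᴴ wMatᴴ * kron wMat wMat = 1 := by
    rw [kron_mul, hw1, kron_one]
  have hWU : IsUnit (kron wMat wMat) := ⟨⟨_, _, hWW, hWW'⟩, rfl⟩
  have hWinv : (kron wMat wMat)⁻¹ = kron wMatᴴ wMatᴴ := Matrix.inv_eq_right_inv hWW
  have hstep2 : Agate r 0 0 =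
      kron wMat wMat * Matrix.diagonal ![x, y, y, x] * kron wMatᴴ wMatᴴ := by
    have harg : (I / 2) • ((r : ℂ) • kron sigmaX sigmaX + (0:ℝ) • kron sigmaY sigmaY +
        ((0:ℝ):ℂ) • kron sigmaZ sigmaZ) = (I * r / 2) • kron sigmaX sigmaX := by
      push_cast
      rw [zero_smul, zero_smul, add_zero, add_zero, smul_smul]
      ring_nf
    have hconj : (I * r / 2) • kron sigmaX sigmaX =
        kron wMat wMat * ((I * r / 2) • kron sigmaZ sigmaZ) * (kron wMat wMat)⁻¹ := by
      rw [hWinv, Matrix.mul_smul, Matrix.smul_mul]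
      rw [kron_mul, kron_mul, w_conj]
    have hdg : (I * (r:ℂ) / 2) • kron sigmaZ sigmaZ =
        Matrix.diagonal ![I * r / 2, -(I * r / 2), -(I * r / 2), I * r / 2] := by
      rw [kron_zz]
    show NormedSpace.exp _ = _
    rw [show ((I:ℂ) / 2) • (((r:ℝ):ℂ) • kron sigmaX sigmaX + ((0:ℝ):ℂ) • kron sigmaY sigmaY +
        ((0:ℝ):ℂ) • kron sigmaZ sigmaZ) = (I * r / 2) • kron sigmaX sigmaX by
      push_cast
      rw [zero_smul, zero_smul, add_zero, add_zero, smul_smul]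
      ring_nf]
    have hexpfun4 : NormedSpace.exp
        (![I * (r:ℂ) / 2, -(I * (r:ℂ) / 2), -(I * (r:ℂ) / 2), I * (r:ℂ) / 2] : Fin 4 → ℂ) =
        ![x, y, y, x] := by
      funext i
      rw [Pi.coe_exp, ← Complex.exp_eq_exp_ℂ]
      fin_cases i <;> simp [hxdef, hydef]
    rw [hconj, Matrix.exp_conj _ _ hWU, hdg, Matrix.exp_diagonal, hexpfun4, hWinv]
  -- assemble
  refine ⟨0, sI * wMatᴴ, vᴴ * Matrix.diagonal ![x, y] * wMatᴴ, wMat * sIᴴ, wMat * v,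
    su2_mul su2_sI (su2_conjT su2_w), ?_, su2_mul su2_w (su2_conjT su2_sI),
    su2_mul su2_w hv, ?_⟩
  · -- b1 ∈ SU(2)
    refine su2_mul (su2_mul (su2_conjT hv) ⟨?_, ?_⟩) (su2_conjT su2_w)
    · rw [Matrix.diagonal_conjTranspose, Matrix.diagonal_mul_diagonal]
      have hconjarg : (starRingEnd ℂ) (I * (r:ℂ) / 2) = -(I * (r:ℂ) / 2) := by
        rw [map_div₀, _root_.map_mul, Complex.conj_I, Complex.conj_ofReal, map_ofNat]
        ring
      have hsx : star x = y := by
        rw [hxdef, hydef, Complex.star_def, ← Complex.exp_conj, hconjarg]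
      have hsy : star y = x := by
        rw [hxdef, hydef, Complex.star_def, ← Complex.exp_conj, map_neg, hconjarg]
        norm_num
      have hstv : star (![x, y] : Fin 2 → ℂ) = ![y, x] := by
        funext i; fin_cases i <;> simp [hsx, hsy]
      rw [hstv]
      ext ⟨i, hi⟩ ⟨j, hj⟩
      interval_cases i <;> interval_cases j <;>
        simp [Matrix.diagonal, Matrix.one_apply, Fin.ext_iff, hyx, hxy]
    · rw [Matrix.det_diagonal]
      simp [Fin.prod_univ_two, hxy]
  · -- the main identity
    rw [hstep1, hstep2]
    have hphase : Complex.exp (I * ((0:ℝ):ℂ)) = 1 := by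
      simp
    rw [hphase, one_smul]
    -- reduce RHS
    have hR : kron (sI * wMatᴴ) (vᴴ * Matrix.diagonal ![x, y] * wMatᴴ) *
        (kron wMat wMat * Matrix.diagonal ![x, y, y, x] * kron wMatᴴ wMatᴴ) *
        kron (wMat * sIᴴ) (wMat * v) =
        kron 1 vᴴ * (kron sI (Matrix.diagonal ![x, y]) * Matrix.diagonal ![x, y, y, x] *
          kron sIᴴ 1) * kron 1 v := by
      calc kron (sI * wMatᴴ) (vᴴ * Matrix.diagonal ![x, y] * wMatᴴ) *
          (kron wMat wMat * Matrix.diagonal ![x, y, y, x] * kron wMatᴴ wMatᴴ) *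
          kron (wMat * sIᴴ) (wMat * v)
          = kron (sI * wMatᴴ * wMat) (vᴴ * Matrix.diagonal ![x, y] * wMatᴴ * wMat) *
            Matrix.diagonal ![x, y, y, x] *
            kron (wMatᴴ * (wMat * sIᴴ)) (wMatᴴ * (wMat * v)) := by
            rw [← Matrix.mul_assoc, ← Matrix.mul_assoc, kron_mul]
            rw [Matrix.mul_assoc (kron (sI * wMatᴴ * wMat) _ * Matrix.diagonal ![x, y, y, x]),
              kron_mul]
            try simp only [Matrix.mul_assoc]
          _ = kron sI (vᴴ * Matrix.diagonal ![x, y]) * Matrix.diagonal ![x, y, y, x] *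
            kron sIᴴ v := by
            rw [Matrix.mul_assoc sI, hw1, Matrix.mul_one,
              Matrix.mul_assoc (vᴴ * Matrix.diagonal ![x, y]), hw1, Matrix.mul_one,
              ← Matrix.mul_assoc wMatᴴ, hw1, Matrix.one_mul,
              ← Matrix.mul_assoc wMatᴴ, hw1, Matrix.one_mul]
          _ = kron 1 vᴴ * (kron sI (Matrix.diagonal ![x, y]) * Matrix.diagonal ![x, y, y, x] *
            kron sIᴴ 1) * kron 1 v := by
            rw [show kron sI (vᴴ * Matrix.diagonal ![x, y]) =
                kron 1 vᴴ * kron sI (Matrix.diagonal ![x, y]) by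
              rw [kron_mul, Matrix.one_mul]]
            rw [show (kron sIᴴ v : Matrix (Fin 4) (Fin 4) ℂ) = kron sIᴴ 1 * kron 1 v by
              rw [kron_mul, Matrix.mul_one, Matrix.one_mul]]
            simp only [Matrix.mul_assoc]
    rw [hR, mid_eq x y hxy]
    -- reduce LHS
    have hL : kron !![1, 0; 0, 0] (1 : Matrix (Fin 2) (Fin 2) ℂ) +
        kron !![0, 0; 0, 1] (vᴴ * Matrix.diagonal ![x*x, y*y] * v) =
        kron 1 vᴴ * Matrix.diagonal ![1, 1, x*x, y*y] * kron 1 v := by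
      rw [← blocks_diag (x*x) (y*y)]
      rw [Matrix.mul_add, Matrix.add_mul, kron_mul, kron_mul, kron_mul, kron_mul]
      simp only [Matrix.one_mul, Matrix.mul_one, hv1, Matrix.mul_assoc]
    rw [hL]

end
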